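/- arXiv:1710.07920 — 6 statements merged into one kernel-verified Lean document; each statement's English description precedes it below -/
import Mathlib

section
/- Let n be a positive integer and let 2^κ be the largest power of 2 dividing n. Define α_{j,n} = C(n+j−1, j) mod 2. Then the minimum j ≥ 1 with α_{j,n} = 1 is exactly 2^κ; that is, C(n+j−1,j) is even for all 1 ≤ j < 2^κ, and C(n+2^κ−1, 2^κ) is odd. -/
/-!
Lucas' theorem, applied to blocks of `a` base-`p` digits at once, says that
`C(p^a m + r, p^a l + t) ≡ C(r, t) C(m, l) (mod p)` for `r, t < p^a`.
Write `n = 2^κ s` with `s` odd. For `1 ≤ j < 2^κ`, `n + j - 1 = 2^κ s + (j - 1)`, so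
`C(n + j - 1, j) ≡ C(j - 1, j) C(s, 0) = 0`; and `n + 2^κ - 1 = 2^κ s + (2^κ - 1)`, so
`C(n + 2^κ - 1, 2^κ) ≡ C(2^κ - 1, 0) C(s, 1) = s ≡ 1 (mod 2)`.
-/

namespace Choose

variable {p m l r t : ℕ} [Fact p.Prime]

theorem choose_mul_add_modEq_choose_mul_choose (hr : r < p) (ht : t < p) :
    (p * m + r).choose (p * l + t) ≡ r.choose t * m.choose l [MOD p] := by
  have hp : 0 < p := (Fact.out : p.Prime).pos
  have h := choose_modEq_choose_mod_mul_choose_div_nat (n := p * m + r) (k := p * l + t) (p := p)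
  rwa [Nat.mul_add_mod, Nat.mul_add_mod, Nat.mod_eq_of_lt hr, Nat.mod_eq_of_lt ht,
    Nat.mul_add_div hp, Nat.mul_add_div hp, Nat.div_eq_of_lt hr, Nat.div_eq_of_lt ht,
    add_zero, add_zero] at h

theorem choose_pow_mul_add_modEq_choose_mul_choose {a : ℕ} (hr : r < p ^ a) (ht : t < p ^ a) :
    (p ^ a * m + r).choose (p ^ a * l + t) ≡ r.choose t * m.choose l [MOD p] := by
  induction a generalizing m l r t with
  | zero =>
    obtain rfl : r = 0 := by simpa using hr
    obtain rfl : t = 0 := by simpa using ht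
    simp [Nat.ModEq.refl]
  | succ a ih =>
    have hq : 0 < p ^ a := pow_pos (Fact.out : p.Prime).pos a
    have hdiv {x : ℕ} (hx : x < p ^ (a + 1)) : x / p ^ a < p :=
      Nat.div_lt_of_lt_mul (by rwa [← pow_succ])
    have hsplit (x y : ℕ) : p ^ (a + 1) * x + y = p ^ a * (p * x + y / p ^ a) + y % p ^ a := by
      rw [mul_add, ← mul_assoc, ← pow_succ, add_assoc, Nat.div_add_mod]
    calc (p ^ (a + 1) * m + r).choose (p ^ (a + 1) * l + t)
        ≡ (r % p ^ a).choose (t % p ^ a) * (p * m + r / p ^ a).choose (p * l + t / p ^ a)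
          [MOD p] := by
          rw [hsplit, hsplit]
          exact ih (Nat.mod_lt _ hq) (Nat.mod_lt _ hq)
      _ ≡ (r % p ^ a).choose (t % p ^ a) * ((r / p ^ a).choose (t / p ^ a) * m.choose l)
          [MOD p] :=
          (choose_mul_add_modEq_choose_mul_choose (hdiv hr) (hdiv ht)).mul_left _
      _ ≡ r.choose t * m.choose l [MOD p] := by
          rw [← mul_assoc]
          refine Nat.ModEq.mul_right _ ?_
          conv_rhs => rw [← Nat.div_add_mod r (p ^ a), ← Nat.div_add_mod t (p ^ a)]
          exact (ih (Nat.mod_lt _ hq) (Nat.mod_lt _ hq)).symm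

end Choose

theorem padicValNat_two_pow_mul_of_odd {k s : ℕ} (hs : Odd s) : padicValNat 2 (2 ^ k * s) = k := by
  rw [padicValNat.mul (pow_ne_zero _ two_ne_zero) (Nat.pos_of_ne_zero hs.pos.ne').ne',
    padicValNat.prime_pow, padicValNat.eq_zero_of_not_dvd hs.not_two_dvd_nat, add_zero]

theorem stmt_4 (n : ℕ) (hn : 0 < n) (κ : ℕ) (hκ : κ = padicValNat 2 n) :
    (∀ j, 1 ≤ j → j < 2 ^ κ → Even ((n + j - 1).choose j))
      ∧ Odd ((n + 2 ^ κ - 1).choose (2 ^ κ)) := by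
  obtain ⟨k, s, hs, rfl⟩ := Nat.exists_eq_two_pow_mul_odd hn.ne'
  obtain rfl : κ = k := hκ.trans (padicValNat_two_pow_mul_of_odd hs)
  have hpow : 1 ≤ 2 ^ κ := Nat.one_le_two_pow
  constructor
  · intro j hj hjκ
    have h := Choose.choose_pow_mul_add_modEq_choose_mul_choose (p := 2) (a := κ) (m := s) (l := 0)
      (r := j - 1) (by omega) hjκ
    rw [Nat.choose_eq_zero_of_lt (by omega : j - 1 < j), zero_mul, mul_zero, zero_add,
      ← Nat.add_sub_assoc hj] at h
    exact Nat.even_iff.mpr h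
  · have h := Choose.choose_pow_mul_add_modEq_choose_mul_choose (p := 2) (a := κ) (m := s) (l := 1)
      (r := 2 ^ κ - 1) (t := 0) (by omega) (by omega)
    rw [Nat.choose_zero_right, one_mul, Nat.choose_one_right, mul_one, add_zero,
      ← Nat.add_sub_assoc hpow] at h
    exact Nat.odd_iff.mpr (Eq.trans h (Nat.odd_iff.mp hs))
end

section
/- For any integers κ ≥ 0 and j with 1 ≤ j ≤ 2^κ − 1, if n is a positive integer divisible by 2^κ, then the binomial coefficient C(n+j−1, j) is even. -/
/-! From `j * C(n + j - 1, j) = n * C(n + j - 1, j - 1)`, the power `2 ^ κ` divides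
`j * C(n + j - 1, j)`; since `0 < j < 2 ^ κ`, not all of it can divide `j`, so `2` divides
the binomial coefficient. -/

theorem Nat.Prime.dvd_of_pow_dvd_mul_of_lt {p k j x : ℕ} (hp : p.Prime) (h : p ^ k ∣ j * x)
    (hj : 0 < j) (hjk : j < p ^ k) : p ∣ x := by
  by_contra hx
  have hcop : Nat.Coprime (p ^ k) x := ((hp.coprime_iff_not_dvd).mpr hx).pow_left k
  exact absurd (Nat.le_of_dvd hj (hcop.dvd_of_dvd_mul_right h)) (Nat.not_le.mpr hjk)

theorem stmt_5_general (κ j n : ℕ) (hj1 : 1 ≤ j) (hj2 : j ≤ 2 ^ κ - 1)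
    (hdvd : 2 ^ κ ∣ n) :
    Even ((n + j - 1).choose j) := by
  obtain ⟨k, rfl⟩ : ∃ k, j = k + 1 := ⟨j - 1, by omega⟩
  rw [show n + (k + 1) - 1 = n + k by omega, even_iff_two_dvd]
  have hmul : (k + 1) * (n + k).choose (k + 1) = (n + k).choose k * n := by
    rw [mul_comm, Nat.choose_succ_right_eq, Nat.add_sub_cancel]
  have hlt : k + 1 < 2 ^ κ := Nat.lt_of_le_sub_one (Nat.two_pow_pos κ) hj2
  refine Nat.prime_two.dvd_of_pow_dvd_mul_of_lt ?_ k.succ_pos hlt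
  rw [hmul]
  exact hdvd.mul_left _

theorem stmt_5 (κ j n : ℕ) (hj1 : 1 ≤ j) (hj2 : j ≤ 2 ^ κ - 1)
    (hn : 0 < n) (hdvd : 2 ^ κ ∣ n) :
    Even ((n + j - 1).choose j) :=
  stmt_5_general κ j n hj1 hj2 hdvd
end

section
/- Let ξ_1,…,ξ_n be i.i.d. random variables with values in {−1,1} and P(ξ_i=1)=p. For any nonnegative integer k ≤ n, the product Π_{j=0}^{k} ξ_{n−j}^{β_{k,j}}, where β_{k,j}=C(k,j) mod 2, has expectation (2p−1)^{2^θ(k)}, where θ(k) is the number of ones in the binary representation of k. -/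
open MeasureTheory ProbabilityTheory

/-- θ(k): number of ones in the binary representation of k. -/
def binOnes (k : ℕ) : ℕ := (Nat.digits 2 k).count 1

/-!
The indices `n - j`, `j ≤ k`, are distinct, so independence factorises the expectation into
`∏ⱼ E[ξ_{n-j}^{β_{k,j}}] = (2p-1)^{∑ⱼ β_{k,j}}`, each exponent being `0` or `1`.
By Lucas' theorem modulo 2, `C(2m+r, 2i+s) ≡ C(r,s) C(m,i)`, so passing from `m` to `2m + r`
multiplies the number of odd entries in the row of Pascal's triangle by `2^r`;
hence `∑ⱼ β_{k,j} = 2^θ(k)`.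
-/

open Finset

lemma binOnes_two_mul_add {r : ℕ} (hr : r < 2) (m : ℕ) :
    binOnes (2 * m + r) = binOnes m + r := by
  rcases Nat.eq_zero_or_pos m with rfl | hm
  · interval_cases r <;> simp [binOnes]
  · rw [binOnes, add_comm, Nat.digits_add 2 one_lt_two r m hr (.inr hm.ne'), List.count_cons]
    interval_cases r <;> simp [binOnes]

lemma choose_two_mul_add_mod_two {r s : ℕ} (hr : r < 2) (hs : s < 2) (m i : ℕ) :
    (2 * m + r).choose (2 * i + s) % 2 = r.choose s * (m.choose i % 2) := by
  have : Fact (Nat.Prime 2) := ⟨Nat.prime_two⟩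
  have lucas := Choose.choose_modEq_choose_mod_mul_choose_div_nat (p := 2)
    (n := 2 * m + r) (k := 2 * i + s)
  rw [show (2 * m + r) % 2 = r by omega, show (2 * i + s) % 2 = s by omega,
    show (2 * m + r) / 2 = m by omega, show (2 * i + s) / 2 = i by omega] at lucas
  rw [lucas, Nat.mul_mod]
  interval_cases r <;> interval_cases s <;> simp

lemma sum_range_two_mul {M : Type*} [AddCommMonoid M] (f : ℕ → M) (n : ℕ) :
    ∑ j ∈ range (2 * n), f j = ∑ i ∈ range n, (f (2 * i) + f (2 * i + 1)) := by
  induction n with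
  | zero => simp
  | succ n ih => rw [Nat.mul_succ, sum_range_succ, sum_range_succ, sum_range_succ, ih, add_assoc]

lemma sum_range_choose_mod_two_eq_of_lt {k N : ℕ} (h : k < N) :
    ∑ j ∈ range N, k.choose j % 2 = ∑ j ∈ range (k + 1), k.choose j % 2 := by
  refine (sum_subset (range_subset_range.mpr h) fun j _ hjk => ?_).symm
  rw [Nat.choose_eq_zero_of_lt (by simpa using hjk), Nat.zero_mod]

theorem sum_range_choose_mod_two (k : ℕ) :
    ∑ j ∈ range (k + 1), k.choose j % 2 = 2 ^ binOnes k := by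
  induction k using Nat.strong_induction_on with
  | _ k ih =>
  rcases Nat.eq_zero_or_pos k with rfl | hk
  · simp [binOnes]
  obtain ⟨m, r, hr, rfl⟩ : ∃ m r, r < 2 ∧ k = 2 * m + r :=
    ⟨k / 2, k % 2, k.mod_lt two_pos, (k.div_add_mod 2).symm⟩
  calc ∑ j ∈ range (2 * m + r + 1), (2 * m + r).choose j % 2
      = ∑ j ∈ range (2 * (m + 1)), (2 * m + r).choose j % 2 :=
        (sum_range_choose_mod_two_eq_of_lt (by omega)).symm
    _ = ∑ i ∈ range (m + 1), (r.choose 0 + r.choose 1) * (m.choose i % 2) := by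
        rw [sum_range_two_mul]
        refine sum_congr rfl fun i _ => ?_
        rw [← add_zero (2 * i), choose_two_mul_add_mod_two hr two_pos, add_zero,
          choose_two_mul_add_mod_two hr one_lt_two, add_mul]
    _ = 2 ^ r * 2 ^ binOnes m := by
        rw [← mul_sum, ih m (by omega)]
        interval_cases r <;> rfl
    _ = 2 ^ binOnes (2 * m + r) := by rw [binOnes_two_mul_add hr, pow_add, mul_comm]

lemma ProbabilityTheory.iIndepFun.integral_finset_prod_comp {Ω ι κ β 𝕜 : Type*}
    {mΩ : MeasurableSpace Ω} {μ : Measure Ω} [MeasurableSpace β] [RCLike 𝕜]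
    {X : ι → Ω → β} (hX : iIndepFun X μ) (mX : ∀ i, Measurable (X i))
    {s : Finset κ} {g : κ → ι} (hg : Set.InjOn g s)
    {f : κ → β → 𝕜} (hf : ∀ j, Measurable (f j)) :
    ∫ ω, ∏ j ∈ s, f j (X (g j) ω) ∂μ = ∏ j ∈ s, ∫ ω, f j (X (g j) ω) ∂μ := by
  have hY : iIndepFun (fun j : s ↦ f j ∘ X (g j)) μ :=
    (hX.precomp hg.injective).comp (fun j : s ↦ f j) fun j ↦ hf j
  have hprod : (fun ω ↦ ∏ j ∈ s, f j (X (g j) ω)) = fun ω ↦ ∏ j : s, f j (X (g j) ω) :=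
    funext fun ω ↦ (prod_coe_sort s _).symm
  rw [hprod, ← prod_coe_sort s]
  exact hY.integral_fun_prod_eq_prod_integral fun j ↦ ((hf j).comp (mX _)).aestronglyMeasurable

lemma integral_pow_eq_pow_integral_of_le_one {Ω : Type*} {mΩ : MeasurableSpace Ω} {μ : Measure Ω}
    [IsProbabilityMeasure μ] (X : Ω → ℝ) {e : ℕ} (he : e ≤ 1) :
    ∫ ω, X ω ^ e ∂μ = (∫ ω, X ω ∂μ) ^ e := by
  interval_cases e <;> simp

theorem stmt_8_general {Ω : Type*} [MeasureSpace Ω] [IsProbabilityMeasure (ℙ : Measure Ω)]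
    (p : ℝ)
    (ξ : ℕ → Ω → ℝ) (hmeas : ∀ i, Measurable (ξ i))
    (hindep : iIndepFun ξ ℙ)
    (hmean : ∀ i, ∫ ω, ξ i ω ∂ℙ = 2 * p - 1)
    (k n : ℕ) (hk : k ≤ n) :
    ∫ ω, ∏ j ∈ Finset.range (k + 1), (ξ (n - j) ω) ^ (k.choose j % 2) ∂ℙ
      = (2 * p - 1) ^ (2 ^ binOnes k) := by
  have hinj : Set.InjOn (n - ·) (range (k + 1) : Set ℕ) := fun a ha b hb hab => by
    simp only [coe_range, Set.mem_Iio] at ha hb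
    simp only at hab
    omega
  calc ∫ ω, ∏ j ∈ range (k + 1), (ξ (n - j) ω) ^ (k.choose j % 2) ∂ℙ
      = ∏ j ∈ range (k + 1), ∫ ω, ξ (n - j) ω ^ (k.choose j % 2) ∂ℙ :=
        hindep.integral_finset_prod_comp hmeas hinj (f := fun j x ↦ x ^ (k.choose j % 2))
          fun _ ↦ by fun_prop
    _ = ∏ j ∈ range (k + 1), (2 * p - 1) ^ (k.choose j % 2) := by
        refine prod_congr rfl fun j _ => ?_
        rw [integral_pow_eq_pow_integral_of_le_one _ (Nat.lt_succ_iff.mp (Nat.mod_lt _ two_pos)),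
          hmean]
    _ = (2 * p - 1) ^ (2 ^ binOnes k) := by rw [prod_pow_eq_pow_sum, sum_range_choose_mod_two]

theorem stmt_8 {Ω : Type*} [MeasureSpace Ω] [IsProbabilityMeasure (ℙ : Measure Ω)]
    (p : ℝ) (hp : p ∈ Set.Ioo (0 : ℝ) 1)
    (ξ : ℕ → Ω → ℝ) (hmeas : ∀ i, Measurable (ξ i))
    (hindep : iIndepFun ξ ℙ)
    (hval : ∀ i ω, ξ i ω = 1 ∨ ξ i ω = -1)
    (hmean : ∀ i, ∫ ω, ξ i ω ∂ℙ = 2 * p - 1)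
    (k n : ℕ) (hk : k ≤ n) :
    ∫ ω, ∏ j ∈ Finset.range (k + 1), (ξ (n - j) ω) ^ (k.choose j % 2) ∂ℙ
      = (2 * p - 1) ^ (2 ^ binOnes k) :=
  stmt_8_general p ξ hmeas hindep hmean k n hk
end

section
/- Let ξ_1,…,ξ_N be i.i.d. {−1,1}-valued random variables with mean 2p−1, and for 0 ≤ k ≤ ℓ define Ξ(−k) = Π_{j=0}^{k} ξ_{N−j}^{β_{k,j}} (with N ≥ ℓ). Then E[Ξ(−k)Ξ(−ℓ)] = (2p−1)^{B(k,ℓ)} where B(k,ℓ) = #{ j ∈ [1, max(k,ℓ)] : β_{k,j} + β_{ℓ,j} = 1 }. -/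
/-!
Because every `ξ_i` squares to `1`, the product `Ξ(-k) Ξ(-ℓ)` collapses to the product of the
`ξ_{N-j}` over the indices `j` where exactly one of `β_{k,j}`, `β_{ℓ,j}` equals `1`. These factors
are distinct independent variables, so the expectation is `(2p-1)` to the number of them.
-/

open MeasureTheory ProbabilityTheory Finset

lemma ProbabilityTheory.iIndepFun.integral_finset_prod_eq_prod_integral {Ω ι : Type*}
    {mΩ : MeasurableSpace Ω} {μ : Measure Ω} {X : ι → Ω → ℝ} (hX : iIndepFun X μ)
    (mX : ∀ i, AEStronglyMeasurable (X i) μ) (s : Finset ι) :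
    ∫ ω, ∏ i ∈ s, X i ω ∂μ = ∏ i ∈ s, ∫ ω, X i ω ∂μ := by
  simp_rw [← prod_coe_sort s]
  exact (hX.precomp Subtype.val_injective).integral_fun_prod_eq_prod_integral (fun i ↦ mX i)

section SignProducts

variable {M : Type*} [CommMonoid M]

lemma pow_eq_ite_mod_two {x : M} (hx : x ^ 2 = 1) (n : ℕ) :
    x ^ n = if n % 2 = 1 then x else 1 := by
  rw [pow_eq_pow_mod n hx]
  rcases Nat.mod_two_eq_zero_or_one n with h | h <;> simp [h]

lemma prod_pow_eq_prod_filter_odd {ι : Type*} (s : Finset ι) {x : ι → M}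
    (hx : ∀ i ∈ s, x i ^ 2 = 1) (e : ι → ℕ) :
    ∏ i ∈ s, x i ^ e i = ∏ i ∈ s with e i % 2 = 1, x i := by
  rw [prod_filter]
  exact prod_congr rfl fun i hi ↦ pow_eq_ite_mod_two (hx i hi) (e i)

lemma prod_range_pow_choose_mod_two_of_le (x : ℕ → M) {k n : ℕ} (hkn : k ≤ n) :
    ∏ j ∈ range (n + 1), x j ^ (k.choose j % 2) = ∏ j ∈ range (k + 1), x j ^ (k.choose j % 2) := by
  refine (prod_subset (range_subset_range.mpr (by omega)) fun j _ hj ↦ ?_).symm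
  rw [Nat.choose_eq_zero_of_lt (by simpa using hj), Nat.zero_mod, pow_zero]

lemma prod_pow_choose_mod_two_mul_prod_pow_choose_mod_two {x : ℕ → M} (hx : ∀ j, x j ^ 2 = 1)
    (k ℓ : ℕ) :
    (∏ j ∈ range (k + 1), x j ^ (k.choose j % 2)) * ∏ j ∈ range (ℓ + 1), x j ^ (ℓ.choose j % 2) =
      ∏ j ∈ Icc 1 (max k ℓ) with k.choose j % 2 + ℓ.choose j % 2 = 1, x j := by
  rw [← prod_range_pow_choose_mod_two_of_le x (le_max_left k ℓ),
    ← prod_range_pow_choose_mod_two_of_le x (le_max_right k ℓ), ← prod_mul_distrib]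
  simp_rw [← pow_add]
  rw [prod_pow_eq_prod_filter_odd _ (fun j _ ↦ hx j)]
  -- `j = 0` drops out since `β_{k,0} + β_{ℓ,0} = 2`
  refine prod_congr (ext fun j ↦ ?_) fun _ _ ↦ rfl
  rcases j with _ | j
  · simp
  · simp only [mem_filter, mem_range, mem_Icc]
    omega

end SignProducts

theorem stmt_9_general {Ω : Type*} [MeasureSpace Ω] [IsProbabilityMeasure (ℙ : Measure Ω)]
    (p : ℝ)
    (ξ : ℕ → Ω → ℝ) (hmeas : ∀ i, Measurable (ξ i))
    (hindep : iIndepFun ξ ℙ)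
    (hval : ∀ i ω, ξ i ω = 1 ∨ ξ i ω = -1)
    (hmean : ∀ i, ∫ ω, ξ i ω ∂ℙ = 2 * p - 1)
    (k ℓ N : ℕ) (hkℓ : k ≤ ℓ) (hℓN : ℓ ≤ N) :
    ∫ ω, (∏ j ∈ Finset.range (k + 1), (ξ (N - j) ω) ^ (k.choose j % 2)) *
          (∏ j ∈ Finset.range (ℓ + 1), (ξ (N - j) ω) ^ (ℓ.choose j % 2)) ∂ℙ
      = (2 * p - 1) ^
          ((Finset.Icc 1 (max k ℓ)).filter
            (fun j => k.choose j % 2 + ℓ.choose j % 2 = 1)).card := by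
  set S := (Icc 1 (max k ℓ)).filter (fun j => k.choose j % 2 + ℓ.choose j % 2 = 1)
  have hsq : ∀ i ω, ξ i ω ^ 2 = 1 := fun i ω ↦ by rcases hval i ω with h | h <;> simp [h]
  have hinj : Set.InjOn (N - ·) (S : Set ℕ) := by
    intro i hi j hj hij
    simp only [S, coe_filter, mem_Icc, Set.mem_ofPred_eq] at hi hj
    simp only at hij
    omega
  calc _ = ∫ ω, ∏ j ∈ S, ξ (N - j) ω ∂ℙ := by
        congr 1 with ω
        exact prod_pow_choose_mod_two_mul_prod_pow_choose_mod_two (fun j ↦ hsq (N - j) ω) k ℓ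
    _ = ∫ ω, ∏ i ∈ S.image (N - ·), ξ i ω ∂ℙ := by simp_rw [prod_image hinj]
    _ = (2 * p - 1) ^ S.card := by
        rw [hindep.integral_finset_prod_eq_prod_integral (fun i ↦ (hmeas i).aestronglyMeasurable),
          prod_congr rfl fun i _ ↦ hmean i, prod_const, card_image_of_injOn hinj]

theorem stmt_9 {Ω : Type*} [MeasureSpace Ω] [IsProbabilityMeasure (ℙ : Measure Ω)]
    (p : ℝ) (hp : p ∈ Set.Ioo (0 : ℝ) 1)
    (ξ : ℕ → Ω → ℝ) (hmeas : ∀ i, Measurable (ξ i))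
    (hindep : iIndepFun ξ ℙ)
    (hval : ∀ i ω, ξ i ω = 1 ∨ ξ i ω = -1)
    (hmean : ∀ i, ∫ ω, ξ i ω ∂ℙ = 2 * p - 1)
    (k ℓ N : ℕ) (hkℓ : k ≤ ℓ) (hℓN : ℓ ≤ N) :
    ∫ ω, (∏ j ∈ Finset.range (k + 1), (ξ (N - j) ω) ^ (k.choose j % 2)) *
          (∏ j ∈ Finset.range (ℓ + 1), (ξ (N - j) ω) ^ (ℓ.choose j % 2)) ∂ℙ
      = (2 * p - 1) ^
          ((Finset.Icc 1 (max k ℓ)).filter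
            (fun j => k.choose j % 2 + ℓ.choose j % 2 = 1)).card :=
  stmt_9_general p ξ hmeas hindep hval hmean k ℓ N hkℓ hℓN
end

section
/- Let ξ_i be i.i.d. {−1,1}-valued with mean 2p−1, p ≠ 1/2, and, for 0 ≤ k ≤ ℓ ≤ N, set Ξ(−k) = Π_{j=0}^{k} ξ_{N−j}^{β_{k,j}}. Then Cov(Ξ(−k), Ξ(−ℓ)) = (2p−1)^{B(k,ℓ)} − (2p−1)^{2^θ(k)+2^θ(ℓ)}, and this covariance is at least 4p(1−p)(2p−1)^{B(k,ℓ)} > 0 when (2p−1)^{B(k,ℓ)} > 0. -/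
open MeasureTheory ProbabilityTheory

/-!
Write `S_k = {j ≤ k : C(k,j) odd}`, so that `Ξ(-k)` is the product of the independent `±1`
variables `ξ_{N-j}`, `j ∈ S_k`, and has mean `(2p-1)^|S_k|`. Since `ξ_i² = 1`, the product
`Ξ(-k) Ξ(-ℓ)` only involves the indices in the symmetric difference `S_k ∆ S_ℓ`, which has
`B(k,ℓ)` elements. Lucas's theorem modulo 2 gives `|S_k| = 2^θ(k)`. For the lower bound,
`|S_k| + |S_ℓ| = B + 2|S_k ∩ S_ℓ|` with `0 ∈ S_k ∩ S_ℓ`, and `1 - (2p-1)² = 4p(1-p)`.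
-/

open Finset
open scoped symmDiff

lemma Nat.choose_mod_two (n j : ℕ) :
    n.choose j % 2 = ((n % 2).choose (j % 2) * (n / 2).choose (j / 2)) % 2 :=
  Choose.choose_modEq_choose_mod_mul_choose_div_nat (p := 2)

lemma Nat.choose_two_mul_mod_two (m j : ℕ) :
    (2 * m).choose j % 2 = if j % 2 = 0 then m.choose (j / 2) % 2 else 0 := by
  rw [Nat.choose_mod_two, Nat.mul_mod_right, Nat.mul_div_cancel_left _ two_pos]
  rcases Nat.mod_two_eq_zero_or_one j with hj | hj <;> simp [hj]

lemma Nat.choose_two_mul_add_one_mod_two (m j : ℕ) :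
    (2 * m + 1).choose j % 2 = m.choose (j / 2) % 2 := by
  rw [Nat.choose_mod_two, show (2 * m + 1) % 2 = 1 by omega, show (2 * m + 1) / 2 = m by omega]
  rcases Nat.mod_two_eq_zero_or_one j with hj | hj <;> simp [hj]

lemma binOnes_two_mul (m : ℕ) : binOnes (2 * m) = binOnes m := by
  rcases m.eq_zero_or_pos with rfl | hm
  · rfl
  · rw [binOnes, Nat.digits_def' one_lt_two (by omega)]
    simp [binOnes]

lemma binOnes_two_mul_add_one (m : ℕ) : binOnes (2 * m + 1) = binOnes m + 1 := by
  rw [binOnes, Nat.digits_def' one_lt_two (by omega)]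
  simp [binOnes, show (2 * m + 1) / 2 = m by omega]

def oddChooseSet (k : ℕ) : Finset ℕ := (range (k + 1)).filter fun j => k.choose j % 2 = 1

lemma mem_oddChooseSet {k j : ℕ} : j ∈ oddChooseSet k ↔ k.choose j % 2 = 1 := by
  refine mem_filter.trans ⟨And.right, fun h => ⟨mem_range.2 ?_, h⟩⟩
  by_contra hj
  rw [Nat.choose_eq_zero_of_lt (by omega)] at h
  omega

lemma zero_mem_oddChooseSet (k : ℕ) : 0 ∈ oddChooseSet k := by
  simp [mem_oddChooseSet]

lemma oddChooseSet_subset_range (k : ℕ) : oddChooseSet k ⊆ range (k + 1) := filter_subset _ _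

lemma oddChooseSet_two_mul (m : ℕ) :
    oddChooseSet (2 * m) = (oddChooseSet m).map ⟨(2 * ·), mul_right_injective₀ two_ne_zero⟩ := by
  ext j
  simp only [mem_oddChooseSet, mem_map, Function.Embedding.coeFn_mk, Nat.choose_two_mul_mod_two]
  constructor
  · intro h
    split_ifs at h with hj
    exact ⟨j / 2, h, by omega⟩
  · rintro ⟨i, hi, rfl⟩
    simpa using hi

lemma oddChooseSet_two_mul_add_one (m : ℕ) :
    oddChooseSet (2 * m + 1) = (oddChooseSet m ×ˢ range 2).image fun x => 2 * x.1 + x.2 := by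
  ext j
  simp only [mem_oddChooseSet, mem_image, mem_product, mem_range, Prod.exists,
    Nat.choose_two_mul_add_one_mod_two]
  constructor
  · intro h
    exact ⟨j / 2, j % 2, ⟨h, Nat.mod_lt _ two_pos⟩, Nat.div_add_mod j 2⟩
  · rintro ⟨i, b, ⟨hi, hb⟩, rfl⟩
    rwa [show (2 * i + b) / 2 = i by omega]

lemma card_oddChooseSet (k : ℕ) : #(oddChooseSet k) = 2 ^ binOnes k := by
  induction k using Nat.evenOddRec with
  | h0 => rfl
  | h_even m ih => rw [oddChooseSet_two_mul, card_map, ih, binOnes_two_mul]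
  | h_odd m ih =>
    have hinj : Set.InjOn (fun x : ℕ × ℕ => 2 * x.1 + x.2) ↑(oddChooseSet m ×ˢ range 2) := by
      rintro ⟨i, b⟩ hx ⟨i', b'⟩ hx' h
      simp only [coe_product, Set.mem_prod, mem_coe, mem_range] at hx hx' h
      ext <;> simp only <;> omega
    rw [oddChooseSet_two_mul_add_one, card_image_of_injOn hinj, card_product, ih,
      binOnes_two_mul_add_one, pow_succ, card_range]

section SymmDiff

variable {α : Type*} [DecidableEq α] (s t : Finset α)

lemma Finset.symmDiff_union_inter : s ∆ t ∪ s ∩ t = s ∪ t := symmDiff_sup_inf s t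

lemma Finset.disjoint_symmDiff_inter : Disjoint (s ∆ t) (s ∩ t) := disjoint_symmDiff_inf s t

lemma Finset.card_symmDiff_add_two_mul_card_inter : #(s ∆ t) + 2 * #(s ∩ t) = #s + #t := by
  rw [← card_union_add_card_inter s t, ← symmDiff_union_inter,
    card_union_of_disjoint (disjoint_symmDiff_inter s t)]
  ring

lemma Finset.prod_mul_prod_eq_prod_symmDiff {M : Type*} [CommMonoid M] {f : α → M}
    (hf : ∀ i, f i * f i = 1) : (∏ i ∈ s, f i) * ∏ i ∈ t, f i = ∏ i ∈ s ∆ t, f i := by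
  rw [← prod_union_inter, ← symmDiff_union_inter, prod_union (disjoint_symmDiff_inter s t),
    mul_assoc, ← prod_mul_distrib]
  simp [hf]

end SymmDiff

lemma Finset.prod_pow_choose_mod_two {M : Type*} [CommMonoid M] (f : ℕ → M) (k : ℕ) :
    ∏ j ∈ range (k + 1), f j ^ (k.choose j % 2) = ∏ j ∈ oddChooseSet k, f j := by
  rw [oddChooseSet, prod_filter]
  refine prod_congr rfl fun j _ => ?_
  rcases Nat.mod_two_eq_zero_or_one (k.choose j) with h | h <;> simp [h]

lemma oddChooseSet_symmDiff (k ℓ : ℕ) :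
    oddChooseSet k ∆ oddChooseSet ℓ
      = (Icc 1 (max k ℓ)).filter fun j => k.choose j % 2 + ℓ.choose j % 2 = 1 := by
  ext j
  simp only [mem_symmDiff, mem_oddChooseSet, mem_filter, mem_Icc]
  have hk := Nat.mod_two_eq_zero_or_one (k.choose j)
  have hl := Nat.mod_two_eq_zero_or_one (ℓ.choose j)
  constructor
  · intro h
    -- `C(k,0) = C(ℓ,0) = 1`, and both coefficients vanish beyond `max k ℓ`
    have hj0 : j ≠ 0 := by rintro rfl; simp at h
    have hjm : j ≤ max k ℓ := by
      by_contra hc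
      rw [Nat.choose_eq_zero_of_lt (by omega), Nat.choose_eq_zero_of_lt (by omega)] at h
      simp at h
    omega
  · omega

lemma Nat.injOn_sub_range (N : ℕ) : Set.InjOn (N - ·) (range (N + 1)) := fun i hi j hj h => by
  simp only [coe_range, Set.mem_Iio] at hi hj
  simp only at h
  omega

lemma ProbabilityTheory.iIndepFun.integral_prod_comp_eq_pow {Ω ι κ : Type*}
    {mΩ : MeasurableSpace Ω} {μ : Measure Ω} {ξ : ι → Ω → ℝ} (hindep : iIndepFun ξ μ)
    (hmeas : ∀ i, AEStronglyMeasurable (ξ i) μ) {m : ℝ} (hmean : ∀ i, ∫ ω, ξ i ω ∂μ = m)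
    {g : κ → ι} {s : Finset κ} (hg : Set.InjOn g s) :
    ∫ ω, ∏ j ∈ s, ξ (g j) ω ∂μ = m ^ #s := by
  have hsub := hindep.precomp (g := g ∘ Subtype.val (p := (· ∈ s))) (hg.injective)
  calc ∫ ω, ∏ j ∈ s, ξ (g j) ω ∂μ = ∫ ω, ∏ j : s, ξ (g j) ω ∂μ := by
        congr! 2 with ω
        exact (prod_coe_sort s _).symm
    _ = ∏ j : s, ∫ ω, ξ (g j) ω ∂μ := hsub.integral_fun_prod_eq_prod_integral fun _ => hmeas _
    _ = m ^ #s := by simp [hmean]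

lemma one_sub_sq_mul_pow_le_pow_sub_pow_add_two_mul {q : ℝ} (hq : q ^ 2 ≤ 1) {b i : ℕ}
    (hb : 0 < q ^ b) (hi : 1 ≤ i) :
    (1 - q ^ 2) * q ^ b ≤ q ^ b - q ^ (b + 2 * i) := by
  have : (q ^ 2) ^ i ≤ q ^ 2 := pow_le_of_le_one (sq_nonneg q) hq (by omega)
  rw [pow_add, pow_mul]
  nlinarith

theorem stmt_10_general {Ω : Type*} [MeasureSpace Ω] [IsProbabilityMeasure (ℙ : Measure Ω)]
    (p : ℝ) (hp : p ∈ Set.Ioo (0 : ℝ) 1)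
    (ξ : ℕ → Ω → ℝ) (hmeas : ∀ i, Measurable (ξ i))
    (hindep : iIndepFun ξ ℙ)
    (hval : ∀ i ω, ξ i ω = 1 ∨ ξ i ω = -1)
    (hmean : ∀ i, ∫ ω, ξ i ω ∂ℙ = 2 * p - 1)
    (k ℓ N : ℕ) (hkℓ : k ≤ ℓ) (hℓN : ℓ ≤ N)
    (B : ℕ)
    (hB : B = ((Finset.Icc 1 (max k ℓ)).filter
            (fun j => k.choose j % 2 + ℓ.choose j % 2 = 1)).card)
    (X Y : Ω → ℝ)
    (hX : X = fun ω => ∏ j ∈ Finset.range (k + 1), (ξ (N - j) ω) ^ (k.choose j % 2))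
    (hY : Y = fun ω => ∏ j ∈ Finset.range (ℓ + 1), (ξ (N - j) ω) ^ (ℓ.choose j % 2)) :
    (∫ ω, X ω * Y ω ∂ℙ) - (∫ ω, X ω ∂ℙ) * (∫ ω, Y ω ∂ℙ)
        = (2 * p - 1) ^ B - (2 * p - 1) ^ (2 ^ binOnes k + 2 ^ binOnes ℓ)
      ∧ (0 < (2 * p - 1) ^ B →
          4 * p * (1 - p) * (2 * p - 1) ^ B
              ≤ (∫ ω, X ω * Y ω ∂ℙ) - (∫ ω, X ω ∂ℙ) * (∫ ω, Y ω ∂ℙ)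
            ∧ 0 < 4 * p * (1 - p) * (2 * p - 1) ^ B) := by
  obtain ⟨hp0, hp1⟩ := hp
  set S := oddChooseSet k with hS
  set T := oddChooseSet ℓ with hT
  have hST : S ∪ T ⊆ range (N + 1) := union_subset
    ((oddChooseSet_subset_range k).trans (range_subset_range.2 (by omega)))
    ((oddChooseSet_subset_range ℓ).trans (range_subset_range.2 (by omega)))
  have hE : ∀ s ⊆ S ∪ T, ∫ ω, ∏ j ∈ s, ξ (N - j) ω ∂ℙ = (2 * p - 1) ^ #s := fun s hs =>
    hindep.integral_prod_comp_eq_pow (fun i => (hmeas i).aestronglyMeasurable) hmean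
      ((Nat.injOn_sub_range N).mono (hs.trans hST))
  have hXY : ∀ ω, (∏ j ∈ S, ξ (N - j) ω) * ∏ j ∈ T, ξ (N - j) ω = ∏ j ∈ S ∆ T, ξ (N - j) ω :=
    fun ω => prod_mul_prod_eq_prod_symmDiff S T fun j => by
      rcases hval (N - j) ω with h | h <;> simp [h]
  have hcov : (∫ ω, X ω * Y ω ∂ℙ) - (∫ ω, X ω ∂ℙ) * (∫ ω, Y ω ∂ℙ)
      = (2 * p - 1) ^ B - (2 * p - 1) ^ (2 ^ binOnes k + 2 ^ binOnes ℓ) := by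
    simp only [hX, hY, prod_pow_choose_mod_two, ← hS, ← hT, hXY]
    rw [hE _ symmDiff_subset_union, hE _ subset_union_left, hE _ subset_union_right,
      card_oddChooseSet, card_oddChooseSet, hB, ← oddChooseSet_symmDiff, pow_add]
  refine ⟨hcov, fun hpos => ⟨?_, mul_pos (by nlinarith) hpos⟩⟩
  have hI : 1 ≤ #(S ∩ T) :=
    card_pos.2 ⟨0, mem_inter.2 ⟨zero_mem_oddChooseSet k, zero_mem_oddChooseSet ℓ⟩⟩
  rw [hcov, ← card_oddChooseSet, ← card_oddChooseSet, ← card_symmDiff_add_two_mul_card_inter,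
    oddChooseSet_symmDiff, ← hB]
  convert one_sub_sq_mul_pow_le_pow_sub_pow_add_two_mul (q := 2 * p - 1) (by nlinarith) hpos hI
    using 1
  ring

theorem stmt_10 {Ω : Type*} [MeasureSpace Ω] [IsProbabilityMeasure (ℙ : Measure Ω)]
    (p : ℝ) (hp : p ∈ Set.Ioo (0 : ℝ) 1) (hp' : p ≠ 1 / 2)
    (ξ : ℕ → Ω → ℝ) (hmeas : ∀ i, Measurable (ξ i))
    (hindep : iIndepFun ξ ℙ)
    (hval : ∀ i ω, ξ i ω = 1 ∨ ξ i ω = -1)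
    (hmean : ∀ i, ∫ ω, ξ i ω ∂ℙ = 2 * p - 1)
    (k ℓ N : ℕ) (hkℓ : k ≤ ℓ) (hℓN : ℓ ≤ N)
    (B : ℕ)
    (hB : B = ((Finset.Icc 1 (max k ℓ)).filter
            (fun j => k.choose j % 2 + ℓ.choose j % 2 = 1)).card)
    (X Y : Ω → ℝ)
    (hX : X = fun ω => ∏ j ∈ Finset.range (k + 1), (ξ (N - j) ω) ^ (k.choose j % 2))
    (hY : Y = fun ω => ∏ j ∈ Finset.range (ℓ + 1), (ξ (N - j) ω) ^ (ℓ.choose j % 2)) :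
    (∫ ω, X ω * Y ω ∂ℙ) - (∫ ω, X ω ∂ℙ) * (∫ ω, Y ω ∂ℙ)
        = (2 * p - 1) ^ B - (2 * p - 1) ^ (2 ^ binOnes k + 2 ^ binOnes ℓ)
      ∧ (0 < (2 * p - 1) ^ B →
          4 * p * (1 - p) * (2 * p - 1) ^ B
              ≤ (∫ ω, X ω * Y ω ∂ℙ) - (∫ ω, X ω ∂ℙ) * (∫ ω, Y ω ∂ℙ)
            ∧ 0 < 4 * p * (1 - p) * (2 * p - 1) ^ B) :=
  stmt_10_general p hp ξ hmeas hindep hval hmean k ℓ N hkℓ hℓN B hB X Y hX hY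
end

section
/- Let E = {−1,1}^{2K+1} with coordinates indexed by −K,…,K. For e ∈ E and sign s ∈ {−1,1}, define e^s by e^s(0)=s, e^s(k)=e^s(k−1)e(k) and e^s(−k)=e^s(−k+1)e(−k+1) for 1 ≤ k ≤ K. Then the measure π on E defined by π(e) = 2^{−K} Π_{k=0}^{K} ρ(Π_{ℓ=0}^{k} e(−ℓ)^{β_{k,ℓ}}), where ρ(x)=p^{(1+x)/2}(1−p)^{(1−x)/2} and β_{k,ℓ}=C(k,ℓ) mod 2, is a stationary distribution for the Markov kernel P(e, e^s)=ρ(s). -/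
/-- ρ on `{-1,1}` (as `ℤˣ`): `ρ(1) = p`, `ρ(-1) = 1 - p`. -/
def rhoU (p : ℝ) (x : ℤˣ) : ℝ := if x = 1 then p else 1 - p

/-- The one-step move of the bootstrap chain on `E = {-1,1}^{2K+1}`, coordinates indexed by
`Fin (2K+1)` where index `i` represents `i - K ∈ [-K, K]`.  Given innovation sign `s`,
`e^s(0) = s`, `e^s(k) = e^s(k-1) e(k)` and `e^s(-k) = e^s(-k+1) e(-k+1)` for `1 ≤ k ≤ K`;
equivalently `e^s(k) = s ∏_{j=1}^{k} e(j)` and `e^s(-k) = s ∏_{j=0}^{k-1} e(-j)`. -/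
def stepE (K : ℕ) (e : Fin (2 * K + 1) → ℤˣ) (s : ℤˣ) : Fin (2 * K + 1) → ℤˣ :=
  fun i =>
    if K ≤ (i : ℕ) then
      s * ∏ j ∈ Finset.Ioc (⟨K, by omega⟩ : Fin (2 * K + 1)) i, e j
    else
      s * ∏ j ∈ Finset.Ioc i (⟨K, by omega⟩ : Fin (2 * K + 1)), e j

/-- The candidate stationary distribution
`π(e) = 2^{-K} ∏_{k=0}^{K} ρ(∏_{ℓ=0}^{k} e(-ℓ)^{β_{k,ℓ}})`, where coordinate `-ℓ` is at
index `K - ℓ`. -/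
noncomputable def piDist (K : ℕ) (p : ℝ) (e : Fin (2 * K + 1) → ℤˣ) : ℝ :=
  (2 : ℝ) ^ (-(K : ℤ)) *
    ∏ k ∈ Finset.range (K + 1),
      rhoU p (∏ ℓ ∈ Finset.range (k + 1),
        e (⟨K - ℓ, by omega⟩ : Fin (2 * K + 1)) ^ (k.choose ℓ % 2))

/-!
The map `(e, s) ↦ (e^s, e(-K))` is a bijection of `E × {±1}`: consecutive coordinates of `e^s`
multiply to the coordinates of `e`, so `e^s` determines `e` up to its leftmost coordinate, and
`s = e^s(0)`. Hence `∑_{e,s} π(e) ρ(s) [e^s = f] = ρ(f(0)) ∑_ε π(e_ε)`, where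
`e_ε(-ℓ) = f(-ℓ-1) f(-ℓ)` for `ℓ < K` and `e_ε(-K) = ε`. By Pascal's rule the `k`-th factor of
`π(e_ε)` is the `(k+1)`-st factor of `π(f)` for `k < K`, while the `K`-th one is `ρ(c ε)` with `c`
independent of `ε`, and `∑_ε ρ(c ε) = 1`. What is left, `ρ(f(0))`, is the `0`-th factor of `π(f)`.
-/

open Finset

theorem Equiv.sum_ite_fst_eq {X Y Z M : Type*} [Fintype X] [Fintype Y] [Fintype Z]
    [DecidableEq Y] [AddCommMonoid M] (Φ : X ≃ Y × Z) (g : X → M) (y : Y) :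
    ∑ x, (if (Φ x).1 = y then g x else 0) = ∑ z, g (Φ.symm (y, z)) := by
  rw [← Φ.symm.sum_comp, Fintype.sum_prod_type]
  simp

section BinomProd
variable {M : Type*} [CommMonoid M]

def binomProd (g : ℕ → M) (k : ℕ) : M := ∏ ℓ ∈ range (k + 1), g ℓ ^ k.choose ℓ

lemma binomProd_zero (g : ℕ → M) : binomProd g 0 = g 0 := by
  simp [binomProd]

lemma binomProd_eq_prod_mul (g : ℕ → M) (k : ℕ) :
    binomProd g k = (∏ ℓ ∈ range k, g ℓ ^ k.choose ℓ) * g k := by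
  rw [binomProd, prod_range_succ, Nat.choose_self, pow_one]

lemma binomProd_congr {g g' : ℕ → M} {k : ℕ} (h : ∀ ℓ ≤ k, g ℓ = g' ℓ) :
    binomProd g k = binomProd g' k :=
  prod_congr rfl fun ℓ hℓ => by rw [h ℓ (Nat.lt_succ_iff.mp (mem_range.mp hℓ))]

lemma binomProd_succ (g : ℕ → M) (k : ℕ) :
    binomProd g (k + 1) = binomProd (fun ℓ => g (ℓ + 1) * g ℓ) k := by
  have hlow : ∏ ℓ ∈ range (k + 1), g (ℓ + 1) ^ k.choose (ℓ + 1) =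
      ∏ ℓ ∈ range k, g (ℓ + 1) ^ k.choose (ℓ + 1) := by
    rw [prod_range_succ, Nat.choose_succ_self, pow_zero, mul_one]
  simp only [binomProd, mul_pow, prod_mul_distrib]
  rw [prod_range_succ', prod_range_succ' (fun ℓ => g ℓ ^ k.choose ℓ)]
  simp only [Nat.choose_succ_succ', pow_add, prod_mul_distrib, Nat.choose_zero_right, hlow]
  ac_rfl

end BinomProd

lemma Int.units_mul_self_mul (u v : ℤˣ) : u * (u * v) = v := by
  rw [← mul_assoc, Int.units_mul_self, one_mul]

lemma sum_rhoU (p : ℝ) : ∑ x : ℤˣ, rhoU p x = 1 := by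
  rw [show (univ : Finset ℤˣ) = {1, -1} by decide, sum_pair (by decide)]
  simp [rhoU]

lemma sum_rhoU_mul_left (p : ℝ) (c : ℤˣ) : ∑ ε : ℤˣ, rhoU p (c * ε) = 1 :=
  (Equiv.sum_comp (Equiv.mulLeft c) (rhoU p)).trans (sum_rhoU p)

namespace BootstrapChain

variable {K : ℕ}

def origin (K : ℕ) : Fin (2 * K + 1) := ⟨K, by omega⟩

/-- The paper's `e(-ℓ)`; for `ℓ > K` the truncated subtraction makes it `e(-K)`. -/
def coordNeg (e : Fin (2 * K + 1) → ℤˣ) (ℓ : ℕ) : ℤˣ := e ⟨K - ℓ, by omega⟩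

lemma piDist_eq_binomProd (p : ℝ) (e : Fin (2 * K + 1) → ℤˣ) :
    piDist K p e = 2 ^ (-(K : ℤ)) * ∏ k ∈ range (K + 1), rhoU p (binomProd (coordNeg e) k) := by
  simp only [piDist, binomProd, coordNeg, ← Int.units_pow_eq_pow_mod_two]

def extendOne (e : Fin (2 * K + 1) → ℤˣ) (j : ℕ) : ℤˣ :=
  if h : j < 2 * K + 1 then e ⟨j, h⟩ else 1

lemma extendOne_val (e : Fin (2 * K + 1) → ℤˣ) (i : Fin (2 * K + 1)) :
    extendOne e i = e i :=
  dif_pos i.isLt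

lemma prod_Ioc_eq_prod_Ioc_extendOne (e : Fin (2 * K + 1) → ℤˣ) (a b : Fin (2 * K + 1)) :
    ∏ j ∈ Ioc a b, e j = ∏ j ∈ Ioc (a : ℕ) b, extendOne e j := by
  rw [← Fin.map_valEmbedding_Ioc, prod_map]
  simp [extendOne_val]

lemma stepE_of_K_le (e : Fin (2 * K + 1) → ℤˣ) (s : ℤˣ) {i : Fin (2 * K + 1)} (h : K ≤ i) :
    stepE K e s i = s * ∏ j ∈ Ioc K i, extendOne e j := by
  rw [stepE, if_pos h, prod_Ioc_eq_prod_Ioc_extendOne]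

lemma stepE_of_le_K (e : Fin (2 * K + 1) → ℤˣ) (s : ℤˣ) {i : Fin (2 * K + 1)} (h : i ≤ K) :
    stepE K e s i = s * ∏ j ∈ Ioc (i : ℕ) K, extendOne e j := by
  rcases h.eq_or_lt with h | h
  · rw [stepE_of_K_le e s h.ge, h]
  · rw [stepE, if_neg (not_le.mpr h), prod_Ioc_eq_prod_Ioc_extendOne]

lemma stepE_origin (e : Fin (2 * K + 1) → ℤˣ) (s : ℤˣ) : stepE K e s (origin K) = s := by
  rw [stepE_of_K_le e s le_rfl]
  simp [origin]

lemma stepE_castSucc_mul_stepE_succ (e : Fin (2 * K + 1) → ℤˣ) (s : ℤˣ) (i : Fin (2 * K)) :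
    stepE K e s i.castSucc * stepE K e s i.succ = e i.succ := by
  have he : extendOne e (i + 1) = e i.succ := extendOne_val e i.succ
  by_cases hi : K ≤ (i : ℕ)
  · rw [stepE_of_K_le e s (i := i.castSucc) hi, stepE_of_K_le e s (i := i.succ) (by rw [Fin.val_succ]; omega)]
    rw [Fin.val_castSucc, Fin.val_succ, prod_Ioc_succ_top hi, he]
    simp only [mul_assoc, mul_left_comm, Int.units_mul_self_mul]
  · rw [stepE_of_le_K e s (i := i.castSucc) (by rw [Fin.val_castSucc]; omega),
      stepE_of_le_K e s (i := i.succ) (by rw [Fin.val_succ]; omega)]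
    rw [Fin.val_castSucc, Fin.val_succ, ← insert_Ioc_add_one_left_eq_Ioc (by omega),
      prod_insert (by simp), he]
    rw [mul_mul_mul_comm, Int.units_mul_self, one_mul, mul_assoc, Int.units_mul_self, mul_one]

/-- Index `0` is the coordinate `-K`, the one that `stepE` forgets. -/
def stepPreimage (f : Fin (2 * K + 1) → ℤˣ) (ε : ℤˣ) : Fin (2 * K + 1) → ℤˣ :=
  Fin.cons ε fun i => f i.castSucc * f i.succ

lemma stepPreimage_stepE (e : Fin (2 * K + 1) → ℤˣ) (s : ℤˣ) :
    stepPreimage (stepE K e s) (e 0) = e := by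
  funext j
  induction j using Fin.cases with
  | zero => rfl
  | succ i => simp [stepPreimage, stepE_castSucc_mul_stepE_succ]

/-- A left inverse of a self-map of a finite type is two-sided, so surjectivity of the step map
needs no separate (telescoping) argument. -/
def stepEquiv (K : ℕ) :
    (Fin (2 * K + 1) → ℤˣ) × ℤˣ ≃ (Fin (2 * K + 1) → ℤˣ) × ℤˣ :=
  Equiv.ofLeftInverseOfCardLE le_rfl (fun x => (stepE K x.1 x.2, x.1 0))
    (fun y => (stepPreimage y.1 y.2, y.1 (origin K)))
    fun x => Prod.ext (stepPreimage_stepE x.1 x.2) (stepE_origin x.1 x.2)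

lemma coordNeg_stepPreimage_of_lt (f : Fin (2 * K + 1) → ℤˣ) (ε : ℤˣ) {ℓ : ℕ} (hℓ : ℓ < K) :
    coordNeg (stepPreimage f ε) ℓ = coordNeg f (ℓ + 1) * coordNeg f ℓ := by
  have hsucc : (⟨K - ℓ, by omega⟩ : Fin (2 * K + 1)) = Fin.succ ⟨K - (ℓ + 1), by omega⟩ :=
    Fin.ext (by simp only [Fin.val_succ]; omega)
  rw [coordNeg, hsucc, stepPreimage, Fin.cons_succ, ← hsucc]
  rfl

lemma coordNeg_stepPreimage_self (f : Fin (2 * K + 1) → ℤˣ) (ε : ℤˣ) :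
    coordNeg (stepPreimage f ε) K = ε := by
  simp [coordNeg, stepPreimage]

lemma binomProd_stepPreimage_of_lt (f : Fin (2 * K + 1) → ℤˣ) (ε : ℤˣ) {k : ℕ} (hk : k < K) :
    binomProd (coordNeg (stepPreimage f ε)) k = binomProd (coordNeg f) (k + 1) := by
  rw [binomProd_succ]
  exact binomProd_congr fun ℓ hℓ => coordNeg_stepPreimage_of_lt f ε (by omega)

lemma binomProd_stepPreimage_self (f : Fin (2 * K + 1) → ℤˣ) (ε : ℤˣ) :
    binomProd (coordNeg (stepPreimage f ε)) K =
      (∏ ℓ ∈ range K, (coordNeg f (ℓ + 1) * coordNeg f ℓ) ^ K.choose ℓ) * ε := by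
  rw [binomProd_eq_prod_mul, coordNeg_stepPreimage_self]
  congr 1
  exact prod_congr rfl fun ℓ hℓ => by rw [coordNeg_stepPreimage_of_lt f ε (mem_range.mp hℓ)]

lemma sum_piDist_stepPreimage (p : ℝ) (f : Fin (2 * K + 1) → ℤˣ) :
    ∑ ε : ℤˣ, piDist K p (stepPreimage f ε) * rhoU p (f (origin K)) = piDist K p f := by
  set c := ∏ ℓ ∈ range K, (coordNeg f (ℓ + 1) * coordNeg f ℓ) ^ K.choose ℓ
  have hpre : ∀ ε, piDist K p (stepPreimage f ε) = 2 ^ (-(K : ℤ)) *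
      (∏ k ∈ range K, rhoU p (binomProd (coordNeg f) (k + 1))) * rhoU p (c * ε) := by
    intro ε
    rw [piDist_eq_binomProd, prod_range_succ, binomProd_stepPreimage_self, mul_assoc]
    congr 2
    exact prod_congr rfl fun k hk => by rw [binomProd_stepPreimage_of_lt f ε (mem_range.mp hk)]
  simp_rw [hpre, ← sum_mul, ← mul_sum, sum_rhoU_mul_left, piDist_eq_binomProd,
    prod_range_succ' _ K, binomProd_zero, mul_one, mul_assoc]
  rfl

end BootstrapChain

open BootstrapChain

theorem stmt_12_general (K : ℕ) (p : ℝ) :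
    ∀ f : Fin (2 * K + 1) → ℤˣ,
      ∑ e : Fin (2 * K + 1) → ℤˣ, ∑ s : ℤˣ,
          piDist K p e * rhoU p s * (if stepE K e s = f then 1 else 0)
        = piDist K p f := by
  intro f
  calc _ = ∑ x : (Fin (2 * K + 1) → ℤˣ) × ℤˣ,
        if (stepEquiv K x).1 = f then piDist K p x.1 * rhoU p x.2 else 0 := by
        rw [← Fintype.sum_prod_type']
        simp only [mul_ite, mul_one, mul_zero]
        rfl
    _ = ∑ ε, piDist K p (stepPreimage f ε) * rhoU p (f (origin K)) :=
        Equiv.sum_ite_fst_eq (stepEquiv K) _ f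
    _ = piDist K p f := sum_piDist_stepPreimage p f

theorem stmt_12 (K : ℕ) (p : ℝ) (hp : p ∈ Set.Ioo (0 : ℝ) 1) :
    ∀ f : Fin (2 * K + 1) → ℤˣ,
      ∑ e : Fin (2 * K + 1) → ℤˣ, ∑ s : ℤˣ,
          piDist K p e * rhoU p s * (if stepE K e s = f then 1 else 0)
        = piDist K p f :=
  stmt_12_general K p
end
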